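/- Let ω > 0, p > 1, and a > 0. Then the function φ(x) = ((p+1)ω/2)^{1/(p−1)} (sinh((p−1)√ω x/2 + a))^{−2/(p−1)} is a solution on (0, ∞) of the ODE φ'' = ω φ + φ^p, and φ together with φ' belongs to L²(0, ∞). -/

import Mathlib

/-!
Writing `u = k x + a` with `k = (p-1)√ω/2` and `β = 2/(p-1)`, the profile is `φ = C sinh(u)^{-β}`.
Differentiating twice and using `cosh² = sinh² + 1` gives
`φ'' = (βk)² φ + C β (β+1) k² sinh(u)^{-β-2}`; here `(βk)² = ω`, and the choice of `C` makes
`C^{p-1} = β(β+1)k²`, so the last term is `φ^p` because `βp = β + 2`.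
For square integrability, `sinh(kx + a) ≥ sinh(a) e^{kx}` gives `φ(x) ≤ C sinh(a)^{-β} e^{-βkx}`,
and `cosh u ≤ e^u ≤ (e^a / sinh a) sinh u` gives `|φ'| ≤ βk (e^a / sinh a) φ`.
-/

open MeasureTheory Set Real Filter Topology

lemma sinh_mul_exp_le_sinh_add (a : ℝ) {t : ℝ} (ht : 0 ≤ t) : sinh a * exp t ≤ sinh (t + a) := by
  have h₁ : exp (-(t + a)) ≤ exp (-a) * exp t := by
    rw [← exp_add]; exact exp_le_exp.mpr (by linarith)
  have h₂ : exp (t + a) = exp a * exp t := by rw [add_comm, exp_add]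
  rw [sinh_eq, sinh_eq, h₂]
  linarith

lemma cosh_le_exp_of_nonneg {u : ℝ} (hu : 0 ≤ u) : cosh u ≤ exp u := by
  have : exp (-u) ≤ exp u := exp_le_exp.mpr (by linarith)
  rw [cosh_eq]; linarith

lemma integrableOn_Ioi_sq_of_abs_le_mul_exp {f : ℝ → ℝ} {M c : ℝ} (hc : 0 < c)
    (hf : AEStronglyMeasurable f (volume.restrict (Ioi 0)))
    (hbound : ∀ x > 0, |f x| ≤ M * exp (-c * x)) :
    IntegrableOn (fun x => f x ^ 2) (Ioi 0) := by
  refine ((exp_neg_integrableOn_Ioi 0 (by positivity : 0 < 2 * c)).const_mul (M ^ 2)).mono'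
    (hf.pow 2) ?_
  filter_upwards [ae_restrict_mem measurableSet_Ioi] with x hx
  calc ‖f x ^ 2‖ = |f x| ^ 2 := by rw [norm_pow, norm_eq_abs]
    _ ≤ (M * exp (-c * x)) ^ 2 := pow_le_pow_left₀ (abs_nonneg _) (hbound x hx) 2
    _ = M ^ 2 * exp (-(2 * c) * x) := by rw [mul_pow, ← exp_nat_mul]; ring_nf

noncomputable def sinhProfile (C β k a x : ℝ) : ℝ := C * sinh (k * x + a) ^ (-β)

namespace sinhProfile

variable {C β k a x : ℝ}

lemma hasDerivAt (hx : 0 < k * x + a) :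
    HasDerivAt (sinhProfile C β k a)
      (-(C * β * k) * (sinh (k * x + a) ^ (-β - 1) * cosh (k * x + a))) x := by
  have hs : sinh (k * x + a) ≠ 0 := (sinh_pos_iff.mpr hx).ne'
  have hu : HasDerivAt (fun y => k * y + a) k x := by
    simpa using ((hasDerivAt_id x).const_mul k).add_const a
  exact ((hu.sinh.rpow_const (p := -β) (Or.inl hs)).const_mul C).congr_deriv (by ring)

lemma deriv_deriv (hx : 0 < k * x + a) :
    deriv (deriv (sinhProfile C β k a)) x =
      (β * k) ^ 2 * sinhProfile C β k a x +
        C * β * (β + 1) * k ^ 2 * sinh (k * x + a) ^ (-β - 2) := by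
  have hs : 0 < sinh (k * x + a) := sinh_pos_iff.mpr hx
  have hu : HasDerivAt (fun y => k * y + a) k x := by
    simpa using ((hasDerivAt_id x).const_mul k).add_const a
  have hpos : ∀ᶠ y in 𝓝 x, 0 < k * y + a :=
    continuousAt_const.eventually_lt (by fun_prop) hx
  have hderiv : deriv (sinhProfile C β k a) =ᶠ[𝓝 x]
      fun y => -(C * β * k) * (sinh (k * y + a) ^ (-β - 1) * cosh (k * y + a)) := by
    filter_upwards [hpos] with y hy using (hasDerivAt hy).deriv
  have hderiv' : HasDerivAt
      (fun y => -(C * β * k) * (sinh (k * y + a) ^ (-β - 1) * cosh (k * y + a))) _ x :=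
    ((hu.sinh.rpow_const (Or.inl hs.ne')).mul hu.cosh).const_mul (-(C * β * k))
  rw [hderiv.deriv_eq, hderiv'.deriv]
  set s := sinh (k * x + a)
  have e₁ : s ^ (-β - 1) * s = s ^ (-β) := by
    rw [← rpow_add_one hs.ne']; ring_nf
  have e₂ : s ^ (-β - 1 - 1) * s ^ 2 = s ^ (-β) := by
    rw [sq, ← mul_assoc, ← rpow_add_one hs.ne', ← rpow_add_one hs.ne']; ring_nf
  rw [sinhProfile, show -β - 2 = -β - 1 - 1 by ring]
  linear_combination (C * β * (β + 1) * k ^ 2 * s ^ (-β - 1 - 1)) * cosh_sq (k * x + a) -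
    (C * β * k ^ 2) * e₁ + (C * β * (β + 1) * k ^ 2) * e₂

lemma deriv_deriv_eq_add_rpow {p : ℝ} (hC : 0 < C) (hβp : β * (p - 1) = 2)
    (hCp : C ^ (p - 1) = β * (β + 1) * k ^ 2) (hx : 0 < k * x + a) :
    deriv (deriv (sinhProfile C β k a)) x =
      (β * k) ^ 2 * sinhProfile C β k a x + sinhProfile C β k a x ^ p := by
  have hs : 0 < sinh (k * x + a) := sinh_pos_iff.mpr hx
  have hCpow : C ^ p = C * C ^ (p - 1) := by
    conv_lhs => rw [← add_sub_cancel 1 p, rpow_add hC, rpow_one]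
  rw [deriv_deriv hx, sinhProfile, mul_rpow hC.le (rpow_nonneg hs.le _), ← rpow_mul hs.le,
    hCpow, hCp, show -β * p = -β - 2 by linear_combination -hβp]
  ring

lemma pos (hC : 0 < C) (hx : 0 < k * x + a) : 0 < sinhProfile C β k a x :=
  mul_pos hC (rpow_pos_of_pos (sinh_pos_iff.mpr hx) _)

section Bounds

variable (hC : 0 ≤ C) (hβ : 0 ≤ β) (hk : 0 ≤ k) (ha : 0 < a) (hx : 0 ≤ x)
include hC hβ hk ha hx

lemma le_mul_exp : sinhProfile C β k a x ≤ C * sinh a ^ (-β) * exp (-(β * k) * x) := by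
  have hsa : 0 < sinh a := sinh_pos_iff.mpr ha
  calc C * sinh (k * x + a) ^ (-β)
      ≤ C * (sinh a * exp (k * x)) ^ (-β) := by
        gcongr ?_ * ?_
        exact rpow_le_rpow_of_nonpos (by positivity)
          (sinh_mul_exp_le_sinh_add a (by positivity)) (by linarith)
    _ = C * sinh a ^ (-β) * exp (-(β * k) * x) := by
        rw [mul_rpow hsa.le (exp_pos _).le, ← exp_mul]; ring_nf

lemma abs_deriv_le : |deriv (sinhProfile C β k a) x| ≤
    β * k * (exp a / sinh a) * sinhProfile C β k a x := by
  have hsa : 0 < sinh a := sinh_pos_iff.mpr ha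
  have hu : 0 ≤ k * x := by positivity
  set s := sinh (k * x + a)
  have hs : 0 < s := sinh_pos_iff.mpr (by linarith)
  have hcosh : cosh (k * x + a) ≤ exp a / sinh a * s := by
    calc cosh (k * x + a) ≤ exp a * exp (k * x) := by
          rw [← exp_add, add_comm a]; exact cosh_le_exp_of_nonneg (by linarith)
      _ ≤ exp a / sinh a * s := by
          rw [div_mul_eq_mul_div, le_div_iff₀ hsa, mul_assoc]
          exact mul_le_mul_of_nonneg_left
            (by rw [mul_comm]; exact sinh_mul_exp_le_sinh_add a hu) (exp_pos a).le
  have hrpow : s ^ (-β - 1) * s = s ^ (-β) := by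
    rw [← rpow_add_one hs.ne']; ring_nf
  rw [(hasDerivAt (by linarith)).deriv, abs_mul, abs_neg, abs_of_nonneg (by positivity),
    abs_of_nonneg (by positivity), sinhProfile]
  calc C * β * k * (s ^ (-β - 1) * cosh (k * x + a))
      ≤ C * β * k * (s ^ (-β - 1) * (exp a / sinh a * s)) := by gcongr
    _ = β * k * (exp a / sinh a) * (C * s ^ (-β)) := by rw [← hrpow]; ring

end Bounds

lemma integrableOn_sq (hC : 0 < C) (hβ : 0 < β) (hk : 0 < k) (ha : 0 < a) :
    IntegrableOn (fun x => sinhProfile C β k a x ^ 2) (Ioi 0) := by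
  have hmeas : Measurable (sinhProfile C β k a) := by unfold sinhProfile; fun_prop
  refine integrableOn_Ioi_sq_of_abs_le_mul_exp (M := C * sinh a ^ (-β)) (mul_pos hβ hk)
    hmeas.aestronglyMeasurable fun x hx => ?_
  rw [abs_of_pos (pos hC (by positivity))]
  exact le_mul_exp hC.le hβ.le hk.le ha hx.le

lemma integrableOn_deriv_sq (hC : 0 < C) (hβ : 0 < β) (hk : 0 < k) (ha : 0 < a) :
    IntegrableOn (fun x => deriv (sinhProfile C β k a) x ^ 2) (Ioi 0) := by
  refine integrableOn_Ioi_sq_of_abs_le_mul_exp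
    (M := β * k * (exp a / sinh a) * (C * sinh a ^ (-β))) (mul_pos hβ hk)
    (measurable_deriv _).aestronglyMeasurable fun x hx => ?_
  calc |deriv (sinhProfile C β k a) x|
      ≤ β * k * (exp a / sinh a) * sinhProfile C β k a x :=
        abs_deriv_le hC.le hβ.le hk.le ha hx.le
    _ ≤ β * k * (exp a / sinh a) * (C * sinh a ^ (-β) * exp (-(β * k) * x)) := by
        gcongr; exact le_mul_exp hC.le hβ.le hk.le ha hx.le
    _ = _ := by rw [← mul_assoc]

end sinhProfile

open sinhProfile

/-- For `ω > 0`, `p > 1`, `a > 0`, the explicit profile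
`φ(x) = ((p+1)ω/2)^{1/(p-1)} (sinh((p-1)√ω x/2 + a))^{-2/(p-1)}`
solves `φ'' = ωφ + φ^p` on `(0,∞)` and `φ, φ' ∈ L²(0,∞)`. -/
theorem stmt_2 (ω p a : ℝ) (hω : 0 < ω) (hp : 1 < p) (ha : 0 < a) :
    let φ : ℝ → ℝ := fun x =>
      (((p + 1) * ω / 2) ^ ((1:ℝ) / (p - 1))) *
        (Real.sinh ((p - 1) * Real.sqrt ω * x / 2 + a)) ^ (-(2 / (p - 1)))
    (∀ x ∈ Ioi (0 : ℝ), deriv (deriv φ) x = ω * φ x + (φ x) ^ p) ∧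
      IntegrableOn (fun x => (φ x) ^ 2) (Ioi 0) volume ∧
      IntegrableOn (fun x => (deriv φ x) ^ 2) (Ioi 0) volume := by
  intro φ
  have hp₁ : 0 < p - 1 := by linarith
  set C := ((p + 1) * ω / 2) ^ ((1:ℝ) / (p - 1))
  set β := 2 / (p - 1) with hβ_def
  set k := (p - 1) * √ω / 2 with hk_def
  have hC : 0 < C := by positivity
  have hβ : 0 < β := by positivity
  have hk : 0 < k := by positivity
  have hφ : φ = sinhProfile C β k a := by
    funext x
    rw [sinhProfile, hk_def, show (p - 1) * √ω / 2 * x = (p - 1) * √ω * x / 2 by ring]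
  have hβp : β * (p - 1) = 2 := by rw [hβ_def]; field_simp
  have hβk : β * k = √ω := by rw [hβ_def, hk_def]; field_simp
  have hCp : C ^ (p - 1) = β * (β + 1) * k ^ 2 := by
    rw [← rpow_mul (by positivity), one_div_mul_cancel hp₁.ne', rpow_one, hβ_def, hk_def,
      div_pow, mul_pow, sq_sqrt hω.le]
    field_simp
    ring
  rw [hφ]
  refine ⟨fun x hx => ?_, integrableOn_sq hC hβ hk ha, integrableOn_deriv_sq hC hβ hk ha⟩
  have hx : 0 < x := hx
  rw [deriv_deriv_eq_add_rpow hC hβp hCp (by positivity), hβk, sq_sqrt hω.le]
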